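/- For n ≥ m, the elements t_n(σ) = Σ_{j₁,…,j_m=1}^{n} (e_{j₁}⊗⋯⊗e_{j_m}) ⊗ (e^{j_{σ(1)}}⊗⋯⊗e^{j_{σ(m)}}), for σ ∈ S_m, form a linearly independent family in (ℂ^n)^{⊗m} ⊗ ((ℂ^n)^*)^{⊗m}. -/
import Mathlib


open scoped TensorProduct

noncomputable section

/-- The invariant tensor
`t_n(σ) = Σ_{j₁,…,j_m} (e_{j₁}⊗⋯⊗e_{j_m}) ⊗ (e^{j_{σ(1)}}⊗⋯⊗e^{j_{σ(m)}})`
in `(ℂ^n)^{⊗m} ⊗ ((ℂ^n)^*)^{⊗m}`. -/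
def tEl (n m : ℕ) (σ : Equiv.Perm (Fin m)) :
    (⨂[ℂ] _ : Fin m, (Fin n → ℂ)) ⊗[ℂ]
      (⨂[ℂ] _ : Fin m, Module.Dual ℂ (Fin n → ℂ)) :=
  ∑ j : Fin m → Fin n,
    (PiTensorProduct.tprod ℂ fun i => Pi.single (j i) (1 : ℂ)) ⊗ₜ[ℂ]
      (PiTensorProduct.tprod ℂ fun i =>
        (LinearMap.proj (j (σ i)) : (Fin n → ℂ) →ₗ[ℂ] ℂ))

namespace AuxTEl

variable (n m : ℕ)

def F (k : Fin m → Fin n) : (⨂[ℂ] _ : Fin m, (Fin n → ℂ)) →ₗ[ℂ] ℂ :=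
  PiTensorProduct.lift
    ((MultilinearMap.mkPiAlgebra ℂ (Fin m) ℂ).compLinearMap
      fun i => LinearMap.proj (k i))

def G (k : Fin m → Fin n) :
    (⨂[ℂ] _ : Fin m, Module.Dual ℂ (Fin n → ℂ)) →ₗ[ℂ] ℂ :=
  PiTensorProduct.lift
    ((MultilinearMap.mkPiAlgebra ℂ (Fin m) ℂ).compLinearMap
      fun i => LinearMap.applyₗ (Pi.single (k i) (1 : ℂ)))

def L (k k' : Fin m → Fin n) :
    ((⨂[ℂ] _ : Fin m, (Fin n → ℂ)) ⊗[ℂ]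
      (⨂[ℂ] _ : Fin m, Module.Dual ℂ (Fin n → ℂ))) →ₗ[ℂ] ℂ :=
  (TensorProduct.lid ℂ ℂ).toLinearMap ∘ₗ TensorProduct.map (F n m k) (G n m k')

lemma L_tEl (k k' : Fin m → Fin n) (hk : Function.Injective k)
    (σ : Equiv.Perm (Fin m)) :
    L n m k k' (tEl n m σ) = if (∀ i, k (σ i) = k' i) then 1 else 0 := by
  rw [tEl, map_sum]
  have hterm : ∀ j : Fin m → Fin n,
      L n m k k' ((PiTensorProduct.tprod ℂ fun i => Pi.single (j i) (1 : ℂ)) ⊗ₜ[ℂ]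
        (PiTensorProduct.tprod ℂ fun i =>
          (LinearMap.proj (j (σ i)) : (Fin n → ℂ) →ₗ[ℂ] ℂ))) =
      (∏ i, (Pi.single (j i) (1 : ℂ) : Fin n → ℂ) (k i)) *
        ∏ i, (Pi.single (k' i) (1 : ℂ) : Fin n → ℂ) (j (σ i)) := by
    intro j
    simp [L, F, G, TensorProduct.map_tmul, PiTensorProduct.lift.tprod,
      MultilinearMap.compLinearMap_apply, MultilinearMap.mkPiAlgebra_apply]
  simp only [hterm]
  rw [Fintype.sum_eq_single k]
  · have h1 : (∏ i, (Pi.single (k i) (1 : ℂ) : Fin n → ℂ) (k i)) = 1 := by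
      simp
    rw [h1, one_mul]
    simp only [Pi.single_apply]
    rw [Finset.prod_boole]
    simp
  · intro j hj
    have : ∃ i, k i ≠ j i := by
      by_contra hc
      push_neg at hc
      exact hj (funext fun i => (hc i).symm)
    obtain ⟨i, hi⟩ := this
    have : (∏ i, (Pi.single (j i) (1 : ℂ) : Fin n → ℂ) (k i)) = 0 := by
      apply Finset.prod_eq_zero (Finset.mem_univ i)
      simp [Pi.single_apply, hi]
    rw [this, zero_mul]

end AuxTEl

set_option maxHeartbeats 1000000 in
set_option synthInstance.maxHeartbeats 400000 in
/-- For `n ≥ m`, the family `σ ↦ t_n(σ)` (for `σ ∈ S_m`) is linearly independent. -/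
theorem stmt_12 (n m : ℕ) (h : m ≤ n) :
    LinearIndependent ℂ (tEl n m) := by
  set k : Fin m → Fin n := Fin.castLE h with hk
  have hkinj : Function.Injective k := fun a b hab => by
    simpa [hk, Fin.ext_iff] using hab
  refine (Fintype.linearIndependent_iff (R := ℂ) (v := tEl n m)).mpr ?_
  intro g hg τ
  have := congrArg (AuxTEl.L n m k (k ∘ τ)) hg
  rw [map_sum, map_zero] at this
  simp only [map_smul, AuxTEl.L_tEl n m k (k ∘ τ) hkinj] at this
  have hcond : ∀ σ : Equiv.Perm (Fin m),
      (∀ i, k (σ i) = (k ∘ τ) i) ↔ σ = τ := by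
    intro σ
    constructor
    · intro hh
      exact Equiv.ext fun i => hkinj (hh i)
    · rintro rfl i; rfl
  simp only [hcond] at this
  simpa [smul_eq_mul, Finset.sum_ite_eq'] using this

end
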